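/- arXiv:1711.03811 — 3 statements merged into one kernel-verified Lean document; each statement's English description precedes it below -/
import Mathlib

section
/- Let O be a discrete valuation ring with fraction field K and normalized valuation v : Kˣ → ℤ, and for x ∈ K^n \ {0} set v(x) = min_{1≤j≤n} v(x_j). If x, y ∈ K^n \ {0} satisfy v(x) = v(y), then there exists g ∈ GL_n(O) such that g·x = y; that is, GL_n(O) acts transitively on each valuative sphere S(0,i) = {x ∈ K^n \ {0} : v(x) = i}. -/
/-! If the coordinate `x i` has the least valuation among all coordinates of `x` and `y`, and
`v (y i) = v (x i)`, then `1 + ((y - x) / x i) eᵢᵀ` has entries in `O`, sends `x` to `y`, and has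
determinant `y i / x i`, a unit of `O`. In general a transposition of coordinates first brings a
coordinate of `y` of least valuation to position `i`. -/

/-- The minimum of the coordinate valuations of a vector `x ∈ K^n`
(with value `⊤` for `x = 0`). -/
def vmin {K : Type*} (v : K → WithTop ℤ) {n : ℕ} (x : Fin n → K) : WithTop ℤ :=
  Finset.univ.inf fun j => v (x j)

open Matrix

namespace Matrix

variable {ι R : Type*} [Fintype ι] [DecidableEq ι] [CommRing R]

theorem one_add_vecMulVec_single_mulVec (u x : ι → R) (i : ι) :
    (1 + vecMulVec u (Pi.single i 1)) *ᵥ x = x + x i • u := by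
  rw [add_mulVec, one_mulVec, vecMulVec_mulVec, single_dotProduct, one_mul, op_smul_eq_smul]

theorem det_one_add_vecMulVec_single (u : ι → R) (i : ι) :
    (1 + vecMulVec u (Pi.single i 1)).det = 1 + u i := by
  rw [vecMulVec_eq Unit, det_one_add_replicateCol_mul_replicateRow, single_dotProduct, one_mul]

end Matrix

namespace AddValuation

theorem map_intCast_units {R Γ : Type*} [Ring R] [LinearOrderedAddCommMonoidWithTop Γ]
    (v : AddValuation R Γ) (u : ℤˣ) : v ((u : ℤ) : R) = 0 := by
  rcases Int.units_eq_one_or u with rfl | rfl <;> simp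

theorem nonneg_map_div_iff {K Γ : Type*} [Field K] [LinearOrderedAddCommGroupWithTop Γ]
    (v : AddValuation K Γ) {a b : K} (hb : b ≠ 0) : 0 ≤ v (a / b) ↔ v b ≤ v a := by
  rw [← add_le_add_iff_right_of_ne_top (v.ne_top_iff.2 hb),
    add_zero, ← v.map_mul, mul_div_cancel₀ _ hb]

end AddValuation

section IntegralGL

variable {K Γ ι : Type*} [Field K] [LinearOrderedAddCommGroupWithTop Γ]
  [Fintype ι] [DecidableEq ι] {v : AddValuation K Γ}

variable (v) in
/-- `g ∈ GL(O)` for the valuation ring `O = {a | 0 ≤ v a}` of `v`. -/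
def IsIntegralGL (g : Matrix ι ι K) : Prop :=
  (∀ i j, 0 ≤ v (g i j)) ∧ v g.det = 0

theorem IsIntegralGL.submatrix_perm {g : Matrix ι ι K} (hg : IsIntegralGL v g)
    (σ : Equiv.Perm ι) : IsIntegralGL v (g.submatrix σ id) :=
  ⟨fun i j => hg.1 (σ i) j, by
    rw [det_permute, v.map_mul, v.map_intCast_units, hg.2, add_zero]⟩

theorem isIntegralGL_one_add_vecMulVec_single {u : ι → K} (hu : ∀ j, 0 ≤ v (u j)) (i : ι)
    (hdet : v (1 + u i) = 0) : IsIntegralGL v (1 + vecMulVec u (Pi.single i 1)) := by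
  refine ⟨fun j k => v.map_le_add ?_ ?_, by rw [det_one_add_vecMulVec_single, hdet]⟩
  · rw [one_apply]; split_ifs <;> simp
  · rw [vecMulVec_apply, v.map_mul, Pi.single_apply]
    split_ifs <;> simp [hu j]

theorem exists_isIntegralGL_mulVec_eq_of_le {x y : ι → K} {i : ι} (hxi : x i ≠ 0)
    (hx : ∀ j, v (x i) ≤ v (x j)) (hy : ∀ j, v (x i) ≤ v (y j)) (hyi : v (y i) = v (x i)) :
    ∃ g, IsIntegralGL v g ∧ g *ᵥ x = y := by
  have hu : ∀ j, 0 ≤ v ((y j - x j) / x i) := fun j =>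
    (v.nonneg_map_div_iff hxi).2 ((le_min (hy j) (hx j)).trans (v.map_sub _ _))
  have hdet : v (1 + (y i - x i) / x i) = 0 := by
    rw [one_add_div hxi, add_sub_cancel, v.map_div,
      LinearOrderedAddCommGroupWithTop.sub_eq_zero (v.ne_top_iff.2 hxi), hyi]
  refine ⟨_, isIntegralGL_one_add_vecMulVec_single hu i hdet, ?_⟩
  ext j
  rw [one_add_vecMulVec_single_mulVec, Pi.add_apply, Pi.smul_apply, smul_eq_mul,
    mul_div_cancel₀ _ hxi, add_sub_cancel]

end IntegralGL

section vmin

variable {K : Type*} [Field K] (v : AddValuation K (WithTop ℤ)) {n : ℕ}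

theorem vmin_le (x : Fin n → K) (j : Fin n) : vmin v x ≤ v (x j) :=
  Finset.inf_le (Finset.mem_univ j)

theorem vmin_eq_top_iff {x : Fin n → K} : vmin v x = ⊤ ↔ x = 0 := by
  simp [vmin, Finset.inf_eq_top_iff, funext_iff]

theorem exists_ne_zero_eq_vmin {x : Fin n → K} (hx : x ≠ 0) :
    ∃ i, x i ≠ 0 ∧ v (x i) = vmin v x := by
  obtain ⟨k, -⟩ := Function.ne_iff.1 hx
  obtain ⟨i, -, hi⟩ :=
    Finset.exists_mem_eq_inf Finset.univ ⟨k, Finset.mem_univ k⟩ fun j => v (x j)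
  refine ⟨i, fun h => hx ((vmin_eq_top_iff v).1 ?_), hi.symm⟩
  rw [vmin, hi, h, v.map_zero]

theorem exists_isIntegralGL_mulVec_eq {x y : Fin n → K} (hx : x ≠ 0)
    (hxy : vmin v x = vmin v y) : ∃ g, IsIntegralGL v g ∧ g *ᵥ x = y := by
  obtain ⟨i, hxi, hi⟩ := exists_ne_zero_eq_vmin v hx
  have hy : y ≠ 0 := fun h => hx ((vmin_eq_top_iff v).1 (hxy.trans ((vmin_eq_top_iff v).2 h)))
  obtain ⟨j, -, hj⟩ := exists_ne_zero_eq_vmin v hy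
  set σ := Equiv.swap i j
  obtain ⟨g, hg, hgx⟩ := exists_isIntegralGL_mulVec_eq_of_le (v := v) (y := y ∘ σ) hxi
    (fun k => hi ▸ vmin_le v x k) (fun k => hi ▸ hxy ▸ vmin_le v y (σ k))
    (by simp [σ, hi, hj, hxy])
  refine ⟨g.submatrix σ id, hg.submatrix_perm σ, funext fun k => ?_⟩
  change (g *ᵥ x) (σ k) = y k
  simp [hgx, σ]

end vmin

theorem exists_GL_integral_mulVec_eq_of_vmin_eq_general {K : Type*} [Field K] (v : K → WithTop ℤ)
    (hv0 : ∀ a : K, v a = ⊤ ↔ a = 0)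
    (hvmul : ∀ a b : K, v (a * b) = v a + v b)
    (hvadd : ∀ a b : K, min (v a) (v b) ≤ v (a + b))
    (n : ℕ) (x y : Fin n → K) (hx : x ≠ 0)
    (hxy : vmin v x = vmin v y) :
    ∃ g : Matrix (Fin n) (Fin n) K,
      (∀ i j, 0 ≤ v (g i j)) ∧ v g.det = 0 ∧ g.mulVec x = y := by
  have hv1 : v 1 = 0 := by
    have h := hvmul 1 1
    rw [one_mul] at h
    lift v 1 to ℤ using (hv0 1).not.2 one_ne_zero with a
    norm_cast at h ⊢
    omega
  obtain ⟨g, ⟨hint, hdet⟩, hgx⟩ :=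
    exists_isIntegralGL_mulVec_eq (AddValuation.of v ((hv0 0).2 rfl) hv1 hvadd hvmul) hx hxy
  exact ⟨g, hint, hdet, hgx⟩

/-- Let `K` be a field with a surjective normalized discrete valuation `v`
(equivalently, `K` is the fraction field of a DVR `O = {a : 0 ≤ v a}`). If two nonzero
vectors `x, y ∈ K^n` satisfy `v(x) = v(y)` (minimum of coordinate valuations), then there is
`g ∈ GL_n(O)` (entries in `O`, determinant a unit of `O`) with `g·x = y`; i.e. `GL_n(O)` acts
transitively on each valuative sphere `S(0,i)`. -/
theorem exists_GL_integral_mulVec_eq_of_vmin_eq {K : Type*} [Field K] (v : K → WithTop ℤ)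
    (hv0 : ∀ a : K, v a = ⊤ ↔ a = 0)
    (hvmul : ∀ a b : K, v (a * b) = v a + v b)
    (hvadd : ∀ a b : K, min (v a) (v b) ≤ v (a + b))
    (hvsurj : ∀ m : ℤ, ∃ a : K, v a = (m : WithTop ℤ))
    (n : ℕ) (x y : Fin n → K) (hx : x ≠ 0) (hy : y ≠ 0)
    (hxy : vmin v x = vmin v y) :
    ∃ g : Matrix (Fin n) (Fin n) K,
      (∀ i j, 0 ≤ v (g i j)) ∧ v g.det = 0 ∧ g.mulVec x = y :=
  exists_GL_integral_mulVec_eq_of_vmin_eq_general v hv0 hvmul hvadd n x y hx hxy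
end

section
/- Let O be a discrete valuation ring with fraction field K, and let V be a d-dimensional K-linear subspace of K^n (0 ≤ d ≤ n). Then there exists g ∈ GL_n(O) such that g(K^d × {0}^{n−d}) = V; that is, GL_n(O) acts transitively on the set of d-dimensional subspaces of K^n. -/
/-!
The valuation ring `O = {v ≥ 0}` is a Bézout domain in which strict divisibility strictly
increases the `ℕ`-valued valuation of nonzero elements, so it is a principal ideal domain.
Put the lattice `N = V ∩ Oⁿ` in Smith normal form with respect to `Oⁿ`: there are a basis
`(b_j)` of `Oⁿ` and an embedding `f` such that `N` has basis `(a_i • b_{f i})`. As `V` is a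
`K`-subspace, the `b_{f i}` lie in `V`, and they span `V` because every vector of `V` becomes
integral after scaling. Reordering the basis so that the `b_{f i}` come first, the matrix with
columns `b_j` lies in `GL_n(O)` and maps `Kᵈ × 0` onto `V`.
-/

open Module Submodule Set

section Lattice

variable {R K ι : Type*} [CommRing R] [Field K] [Algebra R K] [IsFractionRing R K]

theorem exists_smul_eq_algebraMap_comp [IsDomain R] [Finite ι] (x : ι → K) :
    ∃ a : R, a ≠ 0 ∧ ∃ y : ι → R, algebraMap R K a • x = algebraMap R K ∘ y := by
  obtain ⟨⟨a, ha⟩, hx⟩ :=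
    IsLocalization.exist_integer_multiples_of_finite (nonZeroDivisors R) x
  choose y hy using hx
  refine ⟨a, nonZeroDivisors.ne_zero ha, y, funext fun i => ?_⟩
  simpa [Algebra.smul_def] using (hy i).symm

theorem Module.Basis.SmithNormalForm.span_algebraMap_comp_eq [IsDomain R] [Finite ι]
    {V : Submodule K (ι → K)} {N : Submodule R (ι → R)}
    (hN : ∀ y, y ∈ N ↔ algebraMap R K ∘ y ∈ V) {r : ℕ}
    (snf : Basis.SmithNormalForm N ι r) :
    span K (range fun i => algebraMap R K ∘ snf.bM (snf.f i)) = V := by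
  set W := span K (range fun i => algebraMap R K ∘ snf.bM (snf.f i))
  have hbN (i : Fin r) : algebraMap R K ∘ snf.bN i =
      algebraMap R K (snf.a i) • (algebraMap R K ∘ snf.bM (snf.f i)) := by
    ext j; simp [snf.snf, Algebra.smul_def]
  have ha (i : Fin r) : algebraMap R K (snf.a i) ≠ 0 := by
    refine (map_ne_zero_iff _ (IsFractionRing.injective R K)).2 fun h => snf.bN.ne_zero i ?_
    ext1; rw [snf.snf, h, zero_smul]; rfl
  apply le_antisymm
  · rw [span_le, range_subset_iff]
    intro i
    rw [SetLike.mem_coe, ← smul_mem_iff V (ha i), ← hbN, ← hN]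
    exact (snf.bN i).2
  have hNW (z : N) : algebraMap R K ∘ z.1 ∈ W := by
    refine span_le (p := (W.restrictScalars R).comap
      (LinearMap.compLeft (Algebra.linearMap R K) ι ∘ₗ N.subtype)) |>.2 ?_ (snf.bN.mem_span z)
    rintro _ ⟨i, rfl⟩
    change algebraMap R K ∘ snf.bN i ∈ W
    rw [hbN]
    exact smul_mem _ _ (subset_span ⟨i, rfl⟩)
  intro x hx
  obtain ⟨a, ha0, y, hy⟩ := exists_smul_eq_algebraMap_comp (R := R) x
  rw [← smul_mem_iff _ ((map_ne_zero_iff _ (IsFractionRing.injective R K)).2 ha0), hy]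
  exact hNW ⟨y, (hN y).2 (hy ▸ V.smul_mem _ hx)⟩

theorem LinearIndependent.algebraMap_comp {κ : Type*} {u : κ → ι → R}
    (hu : LinearIndependent R u) : LinearIndependent K fun i => algebraMap R K ∘ u i :=
  (hu.map' (LinearMap.compLeft (Algebra.linearMap R K) ι) (LinearMap.ker_eq_bot.2
    fun _ _ h => funext fun j => IsFractionRing.injective R K (congrFun h j))).localization K
    (nonZeroDivisors R)

theorem exists_basis_span_algebraMap_comp_eq [IsDomain R] [IsPrincipalIdealRing R] [Finite ι]
    (V : Submodule K (ι → K)) :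
    ∃ (b : Basis ι R (ι → R)) (f : Fin (finrank K V) ↪ ι),
      span K (range fun i => algebraMap R K ∘ b (f i)) = V := by
  obtain ⟨r, snf⟩ := ((V.restrictScalars R).comap
    (LinearMap.compLeft (Algebra.linearMap R K) ι)).smithNormalForm (Pi.basisFun R ι)
  have hspan := snf.span_algebraMap_comp_eq fun _ => Iff.rfl
  have hli : LinearIndependent K fun i => algebraMap R K ∘ snf.bM (snf.f i) :=
    (snf.bM.linearIndependent.comp _ snf.f.injective).algebraMap_comp
  obtain rfl : r = finrank K V := by rw [← hspan, finrank_span_eq_card hli, Fintype.card_fin]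
  exact ⟨snf.bM, snf.f, hspan⟩

end Lattice

theorem Matrix.mulVec_image_setOf_eq_zero {R m ι : Type*} [CommSemiring R] [Fintype ι]
    [DecidableEq ι] (M : Matrix m ι R) (s : Set ι) :
    M.mulVec '' {x | ∀ j ∉ s, x j = 0} = span R (M.col '' s) := by
  have hcoord : {x : ι → R | ∀ j ∉ s, x j = 0} = span R (Pi.basisFun R ι '' s) := by
    ext x
    rw [SetLike.mem_coe, Basis.mem_span_image]
    simp [Set.subset_def, not_imp_comm]
  rw [hcoord, ← M.coe_mulVecLin, ← map_coe, map_span, image_image]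
  simp

theorem exists_isUnit_det_map_mulVec_image_eq {R K : Type*} [CommRing R] [IsDomain R]
    [IsPrincipalIdealRing R] [Field K] [Algebra R K] [IsFractionRing R K] {n : ℕ}
    (V : Submodule K (Fin n → K)) :
    ∃ A : Matrix (Fin n) (Fin n) R, IsUnit A.det ∧
      (A.map (algebraMap R K)).mulVec '' {x | ∀ j : Fin n, finrank K V ≤ j → x j = 0} =
        (V : Set (Fin n → K)) := by
  classical
  obtain ⟨b, f, hspan⟩ := exists_basis_span_algebraMap_comp_eq (R := R) V
  have hd : finrank K V ≤ n := V.finrank_le.trans_eq (finrank_fin_fun K)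
  obtain ⟨σ, hσ⟩ := Equiv.Perm.exists_extending_pair _ _ (Fin.castLE_injective hd) f.injective
  refine ⟨(Pi.basisFun R (Fin n)).toMatrix (b.reindex σ.symm), ?_, ?_⟩
  · rw [← Basis.det_apply]
    exact Basis.isUnit_det _ _
  have hcoord : {x : Fin n → K | ∀ j : Fin n, finrank K V ≤ j → x j = 0} =
      {x | ∀ j ∉ range (Fin.castLE hd), x j = 0} := by
    ext x
    simp
  have hcol : (((Pi.basisFun R (Fin n)).toMatrix (b.reindex σ.symm)).map (algebraMap R K)).col ∘
      Fin.castLE hd = fun i => algebraMap R K ∘ b (f i) := by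
    ext i k
    simp [hσ, Basis.toMatrix_apply]
  rw [hcoord, Matrix.mulVec_image_setOf_eq_zero, ← range_comp, hcol, hspan]

theorem WithTop.map_toNat_lt_map_toNat {x y : WithTop ℤ} (hx : 0 ≤ x) (h : x < y) :
    x.map Int.toNat < y.map Int.toNat := by
  induction x <;> induction y <;> simp_all

namespace AddValuation

variable {K : Type*} [Field K]

section

variable {Γ₀ : Type*} [LinearOrderedAddCommGroupWithTop Γ₀] (w : AddValuation K Γ₀)

abbrev valuationSubring : ValuationSubring K := Valuation.valuationSubring w

theorem isUnit_iff_map_eq_zero {x : w.valuationSubring} : IsUnit x ↔ w x = 0 :=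
  (Valuation.valuationSubring.integers w).isUnit_iff_valuation_eq_one

theorem map_lt_map_of_dvdNotUnit {a b : w.valuationSubring} (h : DvdNotUnit a b) : w a < w b := by
  obtain ⟨ha, c, hc, rfl⟩ := h
  have hwa : w a ≠ ⊤ := by simpa using ha
  have hwc : 0 < w c := c.2.lt_of_ne' (mt w.isUnit_iff_map_eq_zero.2 hc)
  simpa using (add_lt_add_iff_right_of_ne_top hwa).2 hwc

end

variable {w : AddValuation K (WithTop ℤ)}

instance : WfDvdMonoid w.valuationSubring where
  wf := Subrelation.wf
    (fun {a _} h => WithTop.map_toNat_lt_map_toNat a.2 (w.map_lt_map_of_dvdNotUnit h))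
    (InvImage.wf (fun a : w.valuationSubring => (w a).map Int.toNat) wellFounded_lt)

-- The `IsBezout` instance comes from `ValuationRing`.
instance : IsPrincipalIdealRing w.valuationSubring :=
  ((IsBezout.TFAE (R := w.valuationSubring)).out 3 1).1 (by infer_instance)

end AddValuation

theorem exists_GL_integral_image_coordSubspace_eq_general {K : Type*} [Field K] (v : K → WithTop ℤ)
    (hv0 : ∀ a : K, v a = ⊤ ↔ a = 0)
    (hvmul : ∀ a b : K, v (a * b) = v a + v b)
    (hvadd : ∀ a b : K, min (v a) (v b) ≤ v (a + b))
    (n d : ℕ)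
    (V : Submodule K (Fin n → K)) (hV : Module.finrank K ↥V = d) :
    ∃ g : Matrix (Fin n) (Fin n) K,
      (∀ i j, 0 ≤ v (g i j)) ∧ v g.det = 0 ∧
        g.mulVec '' {x : Fin n → K | ∀ j : Fin n, d ≤ (j : ℕ) → x j = 0} =
          (V : Set (Fin n → K)) := by
  have hv1 : v 1 = 0 := by
    have h1 : v 1 ≠ ⊤ := by simp [hv0]
    exact (add_right_inj_of_ne_top h1).1 (by rw [← hvmul, mul_one, add_zero])
  let w := AddValuation.of v ((hv0 0).2 rfl) hv1 hvadd hvmul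
  obtain ⟨A, hA, himage⟩ := exists_isUnit_det_map_mulVec_image_eq (R := w.valuationSubring) V
  refine ⟨A.map (algebraMap _ K), fun i j => (A i j).2, ?_, hV ▸ himage⟩
  rw [← RingHom.mapMatrix_apply, ← RingHom.map_det]
  exact w.isUnit_iff_map_eq_zero.1 hA

/-- Let `K` be a field with a surjective normalized discrete valuation `v`
(equivalently, `K` is the fraction field of a DVR `O = {a : 0 ≤ v a}`), and let `V` be a
`d`-dimensional `K`-linear subspace of `K^n` with `0 ≤ d ≤ n`. Then there is `g ∈ GL_n(O)`
(entries in `O`, determinant a unit of `O`) mapping the coordinate subspace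
`K^d × {0}^{n−d}` onto `V`; i.e. `GL_n(O)` acts transitively on the set of `d`-dimensional
subspaces of `K^n`. -/
theorem exists_GL_integral_image_coordSubspace_eq {K : Type*} [Field K] (v : K → WithTop ℤ)
    (hv0 : ∀ a : K, v a = ⊤ ↔ a = 0)
    (hvmul : ∀ a b : K, v (a * b) = v a + v b)
    (hvadd : ∀ a b : K, min (v a) (v b) ≤ v (a + b))
    (hvsurj : ∀ m : ℤ, ∃ a : K, v a = (m : WithTop ℤ))
    (n d : ℕ) (hdn : d ≤ n)
    (V : Submodule K (Fin n → K)) (hV : Module.finrank K ↥V = d) :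
    ∃ g : Matrix (Fin n) (Fin n) K,
      (∀ i j, 0 ≤ v (g i j)) ∧ v g.det = 0 ∧
        g.mulVec '' {x : Fin n → K | ∀ j : Fin n, d ≤ (j : ℕ) → x j = 0} =
          (V : Set (Fin n → K)) :=
  exists_GL_integral_image_coordSubspace_eq_general v hv0 hvmul hvadd n d V hV
end

section
/- Let p be a prime, n ≥ 1, e ≥ 1, and let μ be the Haar measure on ℚ_p^n normalized so that μ(ℤ_p^n) = 1. For x ∈ ℚ_p^n \ {0} let v(x) = min_j v_p(x_j), and set B(0,i) = {x ∈ ℚ_p^n : v(x) ≥ i} and S(0,i) = {x ∈ ℚ_p^n \ {0} : v(x) = i}. Let X ⊆ ℚ_p^n be a measurable set with p^e · X = X. Then: (a) μ(X ∩ B(0, m+e)) = p^{−ne} · μ(X ∩ B(0,m)) for every m ∈ ℤ, so the quantity p^{nm} μ(X ∩ B(0,m)) depends only on m modulo e; and (b) (1/e) · Σ_{i=0}^{e−1} p^{ni} μ(X ∩ B(0,i)) = (1/(e(1 − p^{−n}))) · Σ_{i=0}^{e−1} p^{ni} μ(X ∩ S(0,i)). -/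
/-!
Multiplication by `p` maps the unit polydisk `ℤ_p^n` onto `B(0,1)`, and `ℤ_p^n` is the disjoint
union of the `p^n` translates of `B(0,1)` by vectors of residues `0, …, p-1`; hence scaling by `p^e`
multiplies Haar measure by `p^{-ne}`. As it fixes `X` and maps `B(0,m)` onto `B(0,m+e)`, this
is (a).
For (b), put `G i = p^{ni} μ(X ∩ B(0,i))`. Splitting `B(0,i) = S(0,i) ⊔ B(0,i+1)` gives
`G i = p^{ni} μ(X ∩ S(0,i)) + p^{-n} G (i+1)`, and summing over one period, where `G e = G 0`
by (a), gives `(1 - p^{-n}) ∑ G i = ∑ p^{ni} μ(X ∩ S(0,i))`.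
-/

open MeasureTheory Metric Pointwise ENNReal
open scoped NNReal

theorem Function.Periodic.eq_of_intModEq {α : Type*} {f : ℤ → α} {c : ℤ}
    (hf : Function.Periodic f c) {m m' : ℤ} (h : m ≡ m' [ZMOD c]) : f m = f m' := by
  obtain ⟨k, hk⟩ := h.dvd
  rw [show m' = m + k * c by linarith]
  simpa using (hf.int_mul k m).symm

open Finset in
theorem ENNReal.one_sub_mul_sum_range_eq {G s : ℕ → ℝ≥0∞} {c : ℝ≥0∞} {e : ℕ}
    (hG : ∀ i, G i = s i + c * G (i + 1)) (hGe : G e = G 0) (hG_ne_top : ∀ i, G i ≠ ∞) :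
    (1 - c) * ∑ i ∈ range e, G i = ∑ i ∈ range e, s i := by
  have hshift : ∑ i ∈ range e, G (i + 1) = ∑ i ∈ range e, G i := by
    have h := sum_range_succ' G e
    rw [sum_range_succ, hGe] at h
    exact (ENNReal.add_left_inj (hG_ne_top 0)).1 h.symm
  have hsum : ∑ i ∈ range e, G i = ∑ i ∈ range e, s i + c * ∑ i ∈ range e, G i := by
    conv_lhs => rw [sum_congr rfl fun i _ => hG i]
    rw [sum_add_distrib, ← mul_sum, hshift]
  have hT : ∑ i ∈ range e, G i ≠ ∞ := ENNReal.sum_ne_top.2 fun i _ => hG_ne_top i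
  rw [ENNReal.sub_mul fun _ _ => hT, one_mul]
  have hcT : c * ∑ i ∈ range e, G i ≠ ∞ :=
    ne_top_of_le_ne_top hT (le_add_self.trans_eq hsum.symm)
  exact ENNReal.sub_eq_of_eq_add hcT hsum

namespace Padic

variable {p : ℕ} [hp : Fact p.Prime]

theorem natCast_eq_of_norm_sub_lt_one {a b : ℕ} (ha : a < p) (hb : b < p)
    (h : ‖(a : ℚ_[p]) - b‖ < 1) : a = b := by
  have hdvd : (p : ℤ) ∣ (a : ℤ) - b := by
    rw [← PadicInt.norm_int_lt_one_iff_dvd, PadicInt.norm_def]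
    push_cast
    exact h
  have := Int.eq_zero_of_abs_lt_dvd hdvd (by rw [abs_lt]; omega)
  omega

theorem exists_natCast_norm_sub_lt_one {y : ℚ_[p]} (hy : ‖y‖ ≤ 1) :
    ∃ a < p, ‖y - a‖ < 1 :=
  ⟨PadicInt.zmodRepr ⟨y, hy⟩, PadicInt.zmodRepr_lt_p _,
    PadicInt.norm_sub_zmodRepr_lt_one ⟨y, hy⟩⟩

theorem norm_eq_zpow_iff_le_and_not_le (y : ℚ_[p]) (m : ℤ) :
    ‖y‖ = (p : ℝ) ^ (-m) ↔ ‖y‖ ≤ (p : ℝ) ^ (-m) ∧ ¬‖y‖ ≤ (p : ℝ) ^ (-(m + 1)) := by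
  rw [norm_le_pow_iff_norm_lt_pow_add_one y (-(m + 1)), show -(m + 1) + 1 = -m by ring, not_lt,
    le_antisymm_iff]

variable {ι : Type*} [Fintype ι]

theorem ball_one_eq_closedBall_inv (v : ι → ℚ_[p]) : ball v 1 = closedBall v (p : ℝ)⁻¹ := by
  ext x
  rw [mem_ball, mem_closedBall, dist_pi_lt_iff one_pos, dist_pi_le_iff (by positivity)]
  refine forall_congr' fun j => ?_
  simpa [dist_eq_norm] using (norm_le_pow_iff_norm_lt_pow_add_one (x j - v j) (-1)).symm

theorem closedBall_one_eq_iUnion_ball :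
    closedBall (0 : ι → ℚ_[p]) 1 = ⋃ a : ι → Fin p, ball (fun j => ((a j : ℕ) : ℚ_[p])) 1 := by
  ext x
  simp only [mem_closedBall_zero_iff, pi_norm_le_iff_of_nonneg zero_le_one, Set.mem_iUnion,
    mem_ball, dist_pi_lt_iff one_pos]
  simp only [dist_eq_norm]
  constructor
  · intro hx
    choose a ha hxa using fun j => exists_natCast_norm_sub_lt_one (hx j)
    exact ⟨fun j => ⟨a j, ha j⟩, hxa⟩
  · rintro ⟨a, hxa⟩ j
    calc ‖x j‖ = ‖(x j - (a j : ℕ)) + (a j : ℕ)‖ := by rw [sub_add_cancel]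
      _ ≤ max ‖x j - (a j : ℕ)‖ ‖((a j : ℕ) : ℚ_[p])‖ := nonarchimedean _ _
      _ ≤ 1 := max_le (hxa j).le (IsUltrametricDist.norm_natCast_le_one _ _)

theorem pairwise_disjoint_ball_natCast :
    Pairwise (Function.onFun Disjoint
      fun a : ι → Fin p => ball (fun j => ((a j : ℕ) : ℚ_[p])) 1) := by
  intro a b hab
  refine Set.disjoint_left.2 fun x hxa hxb => hab (funext fun j => Fin.ext ?_)
  have hab : dist (fun j => ((a j : ℕ) : ℚ_[p])) (fun j => ((b j : ℕ) : ℚ_[p])) < 1 :=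
    (IsUltrametricDist.dist_triangle_max _ x _).trans_lt
      (max_lt (by rwa [dist_comm]) hxb)
  rw [dist_pi_lt_iff one_pos] at hab
  exact natCast_eq_of_norm_sub_lt_one (a j).isLt (b j).isLt (by simpa [dist_eq_norm] using hab j)

theorem addHaar_closedBall_one [MeasurableSpace (ι → ℚ_[p])] [BorelSpace (ι → ℚ_[p])]
    (μ : Measure (ι → ℚ_[p])) [μ.IsAddHaarMeasure] :
    μ (closedBall 0 1) = p ^ Fintype.card ι * μ (ball 0 1) := by
  rw [closedBall_one_eq_iUnion_ball, measure_iUnion pairwise_disjoint_ball_natCast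
    fun _ => measurableSet_ball]
  classical
  simp [tsum_fintype, Measure.addHaar_ball_center μ _ 1, Finset.card_univ]

theorem distribHaarChar_natCast :
    distribHaarChar (ι → ℚ_[p]) (Units.mk0 (p : ℚ_[p]) (NeZero.ne _)) =
      ((p : ℝ≥0) ^ Fintype.card ι)⁻¹ := by
  borelize (ι → ℚ_[p])
  have hp0 : (p : ℝ≥0∞) ^ Fintype.card ι ≠ 0 := by simp [hp.out.ne_zero]
  refine distribHaarChar_eq_of_measure_smul_eq_mul (μ := Measure.addHaar) (s := closedBall 0 1)
    (measure_closedBall_pos _ _ one_pos).ne' measure_closedBall_lt_top.ne ?_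
  rw [Units.smul_mk0, _root_.smul_closedBall _ _ zero_le_one, smul_zero, norm_p, mul_one,
    ← ball_one_eq_closedBall_inv, addHaar_closedBall_one, ← mul_assoc]
  push_cast
  rw [ENNReal.inv_mul_cancel hp0 (by simp), one_mul]

theorem addHaar_pow_smul [MeasurableSpace (ι → ℚ_[p])] [BorelSpace (ι → ℚ_[p])]
    (μ : Measure (ι → ℚ_[p])) [μ.IsAddHaarMeasure] (e : ℕ) (s : Set (ι → ℚ_[p])) :
    μ (((p : ℚ_[p]) ^ e) • s) = ((p : ℝ≥0∞) ^ (Fintype.card ι * e))⁻¹ * μ s := by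
  have : ((p : ℚ_[p]) ^ e) • s = (Units.mk0 (p : ℚ_[p]) (NeZero.ne _) ^ e) • s := by
    simp [Units.smul_def]
  rw [this, ← distribHaarChar_mul, map_pow, distribHaarChar_natCast]
  push_cast
  rw [← ENNReal.inv_pow, ← pow_mul, ENNReal.inv_pow]

variable (p ι) in
/-- `B(0, m)`, the ball of valuative radius `m`. -/
def valBall (m : ℤ) : Set (ι → ℚ_[p]) := closedBall 0 ((p : ℝ) ^ (-m))

theorem setOf_forall_norm_le_eq_valBall (m : ℤ) :
    {x : ι → ℚ_[p] | ∀ j, ‖x j‖ ≤ (p : ℝ) ^ (-m)} = valBall p ι m := by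
  ext x
  rw [valBall, mem_closedBall_zero_iff, pi_norm_le_iff_of_nonneg (by positivity), Set.mem_ofPred]

theorem setOf_forall_norm_le_and_exists_norm_eq_eq_diff (m : ℤ) :
    {x : ι → ℚ_[p] | x ≠ 0 ∧ (∀ j, ‖x j‖ ≤ (p : ℝ) ^ (-m)) ∧ ∃ j, ‖x j‖ = (p : ℝ) ^ (-m)} =
      valBall p ι m \ valBall p ι (m + 1) := by
  rw [← setOf_forall_norm_le_eq_valBall, ← setOf_forall_norm_le_eq_valBall]
  ext x
  simp only [Set.mem_ofPred_eq, Set.mem_sdiff, not_forall, norm_eq_zpow_iff_le_and_not_le]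
  constructor
  · rintro ⟨-, hle, j, -, hj⟩
    exact ⟨hle, j, hj⟩
  · rintro ⟨hle, j, hj⟩
    refine ⟨?_, hle, j, hle j, hj⟩
    rintro rfl
    exact hj (by simp [zpow_nonneg])

theorem measurableSet_valBall [MeasurableSpace (ι → ℚ_[p])] [BorelSpace (ι → ℚ_[p])] (m : ℤ) :
    MeasurableSet (valBall p ι m) :=
  isClosed_closedBall.measurableSet

theorem valBall_antitone : Antitone (valBall p ι) := fun _ _ h =>
  closedBall_subset_closedBall
    (zpow_le_zpow_right₀ (by exact_mod_cast hp.out.one_lt.le) (neg_le_neg h))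

theorem pow_smul_valBall (e : ℕ) (m : ℤ) :
    ((p : ℚ_[p]) ^ e) • valBall p ι m = valBall p ι (m + e) := by
  rw [valBall, _root_.smul_closedBall _ _ (zpow_nonneg (Nat.cast_nonneg p) _), smul_zero,
    norm_p_pow, ← zpow_add₀ (mod_cast hp.out.ne_zero), valBall, neg_add, add_comm]

section Cone

variable [MeasurableSpace (ι → ℚ_[p])] [BorelSpace (ι → ℚ_[p])] (μ : Measure (ι → ℚ_[p]))
  [μ.IsAddHaarMeasure] {X : Set (ι → ℚ_[p])} {e : ℕ}

theorem addHaar_inter_valBall_add (hX : ((p : ℚ_[p]) ^ e) • X = X) (m : ℤ) :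
    μ (X ∩ valBall p ι (m + e)) =
      ((p : ℝ≥0∞) ^ (Fintype.card ι * e))⁻¹ * μ (X ∩ valBall p ι m) := by
  rw [← addHaar_pow_smul, Set.smul_set_inter₀ (pow_ne_zero _ (NeZero.ne _)), hX, pow_smul_valBall]

theorem periodic_zpow_mul_addHaar_inter_valBall (hX : ((p : ℚ_[p]) ^ e) • X = X) :
    Function.Periodic
      (fun m : ℤ => (p : ℝ≥0∞) ^ ((Fintype.card ι : ℤ) * m) * μ (X ∩ valBall p ι m)) e := by
  intro m
  have hp0 : (p : ℝ≥0∞) ≠ 0 := by simp [hp.out.ne_zero]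
  have hpk : (p : ℝ≥0∞) ^ (Fintype.card ι * e) ≠ 0 := pow_ne_zero _ hp0
  dsimp only
  rw [addHaar_inter_valBall_add μ hX, mul_add, ENNReal.zpow_add hp0 (by simp), ← Nat.cast_mul,
    zpow_natCast, mul_assoc, ENNReal.mul_inv_cancel_left hpk (by simp)]

theorem one_sub_inv_mul_sum_addHaar_inter_valBall (hX : ((p : ℚ_[p]) ^ e) • X = X) :
    (1 - ((p : ℝ≥0∞) ^ Fintype.card ι)⁻¹) *
        ∑ i ∈ Finset.range e, (p : ℝ≥0∞) ^ (Fintype.card ι * i) * μ (X ∩ valBall p ι i) =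
      ∑ i ∈ Finset.range e, (p : ℝ≥0∞) ^ (Fintype.card ι * i) *
        μ (X ∩ (valBall p ι i \ valBall p ι (i + 1))) := by
  have hp0 : (p : ℝ≥0∞) ≠ 0 := by simp [hp.out.ne_zero]
  refine ENNReal.one_sub_mul_sum_range_eq (fun i => ?_) ?_ (fun i => ?_)
  · have hsplit : μ (X ∩ valBall p ι i) =
        μ (X ∩ (valBall p ι i \ valBall p ι (i + 1))) + μ (X ∩ valBall p ι (i + 1)) := by
      rw [← measure_inter_add_sdiff (X ∩ valBall p ι i) (measurableSet_valBall (i + 1)),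
        Set.inter_assoc, Set.inter_eq_right.2 (valBall_antitone (lt_add_one _).le),
        Set.inter_sdiff_assoc, add_comm]
    have hpow : (p : ℝ≥0∞) ^ (Fintype.card ι * i) =
        ((p : ℝ≥0∞) ^ Fintype.card ι)⁻¹ * (p : ℝ≥0∞) ^ (Fintype.card ι * (i + 1)) := by
      rw [mul_add, mul_one, pow_add, mul_comm (_ ^ (Fintype.card ι * i)),
        ENNReal.inv_mul_cancel_left (pow_ne_zero _ hp0) (by simp)]
    rw [hsplit, mul_add, Nat.cast_succ, ← mul_assoc, ← hpow]
  · simpa [← mul_assoc, ENNReal.mul_inv_cancel (pow_ne_zero _ hp0)]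
      using congrArg ((p : ℝ≥0∞) ^ (Fintype.card ι * e) * ·) (addHaar_inter_valBall_add μ hX 0)
  · exact ENNReal.mul_ne_top (by simp) ((measure_mono Set.inter_subset_right).trans_lt
      measure_closedBall_lt_top).ne

end Cone

end Padic

theorem padic_cone_density_ball_sphere_general (p : ℕ) [hp : Fact p.Prime] (n e : ℕ)
    (hn : 1 ≤ n)
    [MeasurableSpace (Fin n → ℚ_[p])] [BorelSpace (Fin n → ℚ_[p])]
    (μ : Measure (Fin n → ℚ_[p])) [μ.IsAddHaarMeasure]
    (X : Set (Fin n → ℚ_[p]))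
    (hXcone : ((p : ℚ_[p]) ^ e) • X = X)
    (B : ℤ → Set (Fin n → ℚ_[p]))
    (hB : ∀ m : ℤ, B m = {x : Fin n → ℚ_[p] | ∀ j, ‖x j‖ ≤ (p : ℝ) ^ (-m)})
    (S : ℤ → Set (Fin n → ℚ_[p]))
    (hS : ∀ i : ℤ, S i = {x : Fin n → ℚ_[p] |
      x ≠ 0 ∧ (∀ j, ‖x j‖ ≤ (p : ℝ) ^ (-i)) ∧ ∃ j, ‖x j‖ = (p : ℝ) ^ (-i)}) :
    (∀ m : ℤ, μ (X ∩ B (m + e)) = ((p : ℝ≥0∞) ^ (n * e))⁻¹ * μ (X ∩ B m)) ∧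
    (∀ m m' : ℤ, m % (e : ℤ) = m' % (e : ℤ) →
      (p : ℝ≥0∞) ^ ((n : ℤ) * m) * μ (X ∩ B m) =
        (p : ℝ≥0∞) ^ ((n : ℤ) * m') * μ (X ∩ B m')) ∧
    (1 / (e : ℝ≥0∞)) * ∑ i ∈ Finset.range e, (p : ℝ≥0∞) ^ (n * i) * μ (X ∩ B (i : ℤ)) =
      (1 / ((e : ℝ≥0∞) * (1 - ((p : ℝ≥0∞) ^ n)⁻¹))) *
        ∑ i ∈ Finset.range e, (p : ℝ≥0∞) ^ (n * i) * μ (X ∩ S (i : ℤ)) := by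
  have hB' : B = Padic.valBall p (Fin n) :=
    funext fun m => (hB m).trans (Padic.setOf_forall_norm_le_eq_valBall m)
  have hS' : S = fun i => Padic.valBall p (Fin n) i \ Padic.valBall p (Fin n) (i + 1) :=
    funext fun i => (hS i).trans (Padic.setOf_forall_norm_le_and_exists_norm_eq_eq_diff i)
  subst hB' hS'
  refine ⟨fun m => by simpa using Padic.addHaar_inter_valBall_add μ hXcone m,
    fun m m' h => by
      simpa using (Padic.periodic_zpow_mul_addHaar_inter_valBall μ hXcone).eq_of_intModEq h, ?_⟩
  have hc : 1 - ((p : ℝ≥0∞) ^ n)⁻¹ ≠ 0 := (tsub_pos_iff_lt.2 (ENNReal.inv_lt_one.2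
    (one_lt_pow₀ (by exact_mod_cast hp.out.one_lt) (by omega)))).ne'
  have hsum := Padic.one_sub_inv_mul_sum_addHaar_inter_valBall μ hXcone
  rw [Fintype.card_fin] at hsum
  rw [← hsum, one_div, one_div, ENNReal.mul_inv (Or.inr (by simp)) (Or.inl (by simp)), mul_assoc,
    ENNReal.inv_mul_cancel_left hc (by simp)]

/-- Let `p` be prime, `n, e ≥ 1`, and `μ` the Haar measure on `ℚ_p^n`
normalized so `μ(ℤ_p^n) = 1`. Let `B(0,m)` be the ball of valuative radius `m` around `0`
and `S(0,i)` the sphere `{x ≠ 0 : v(x) = i}` (with `v` the minimum of the coordinate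
`p`-adic valuations, expressed via norms). If `X ⊆ ℚ_p^n` is measurable with `p^e·X = X`,
then:
(a) `μ(X ∩ B(0,m+e)) = p^{−ne} μ(X ∩ B(0,m))` for all `m ∈ ℤ`, so `p^{nm} μ(X ∩ B(0,m))`
depends only on `m` modulo `e`; and
(b) `(1/e) Σ_{i=0}^{e−1} p^{ni} μ(X ∩ B(0,i))
      = (1/(e(1−p^{−n}))) Σ_{i=0}^{e−1} p^{ni} μ(X ∩ S(0,i))`. -/
theorem padic_cone_density_ball_sphere (p : ℕ) [hp : Fact p.Prime] (n e : ℕ)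
    (hn : 1 ≤ n) (he : 1 ≤ e)
    [MeasurableSpace (Fin n → ℚ_[p])] [BorelSpace (Fin n → ℚ_[p])]
    (μ : Measure (Fin n → ℚ_[p])) [μ.IsAddHaarMeasure]
    (hμ1 : μ {x : Fin n → ℚ_[p] | ∀ j, ‖x j‖ ≤ 1} = 1)
    (X : Set (Fin n → ℚ_[p])) (hXmeas : MeasurableSet X)
    (hXcone : ((p : ℚ_[p]) ^ e) • X = X)
    (B : ℤ → Set (Fin n → ℚ_[p]))
    (hB : ∀ m : ℤ, B m = {x : Fin n → ℚ_[p] | ∀ j, ‖x j‖ ≤ (p : ℝ) ^ (-m)})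
    (S : ℤ → Set (Fin n → ℚ_[p]))
    (hS : ∀ i : ℤ, S i = {x : Fin n → ℚ_[p] |
      x ≠ 0 ∧ (∀ j, ‖x j‖ ≤ (p : ℝ) ^ (-i)) ∧ ∃ j, ‖x j‖ = (p : ℝ) ^ (-i)}) :
    (∀ m : ℤ, μ (X ∩ B (m + e)) = ((p : ℝ≥0∞) ^ (n * e))⁻¹ * μ (X ∩ B m)) ∧
    (∀ m m' : ℤ, m % (e : ℤ) = m' % (e : ℤ) →
      (p : ℝ≥0∞) ^ ((n : ℤ) * m) * μ (X ∩ B m) =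
        (p : ℝ≥0∞) ^ ((n : ℤ) * m') * μ (X ∩ B m')) ∧
    (1 / (e : ℝ≥0∞)) * ∑ i ∈ Finset.range e, (p : ℝ≥0∞) ^ (n * i) * μ (X ∩ B (i : ℤ)) =
      (1 / ((e : ℝ≥0∞) * (1 - ((p : ℝ≥0∞) ^ n)⁻¹))) *
        ∑ i ∈ Finset.range e, (p : ℝ≥0∞) ^ (n * i) * μ (X ∩ S (i : ℤ)) :=
  padic_cone_density_ball_sphere_general p (hp := hp) n e hn μ X hXcone B hB S hS
end
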